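/- There exists a continuous function X : [0,1] → ℝ such that, writing Q_n(X) = Σ_{k=0}^{2^n − 1} (X((k+1)/2^n) − X(k/2^n))² for the quadratic variation sum along the dyadic partition of level n, one has limsup_{n→∞} Q_n(X) = +∞ and liminf_{n→∞} Q_n(X) = 0. -/

import Mathlib

/-!
Take the lacunary series `X = ∑ₘ aₘ cos (2π 4^{Mₘ} t)` with `aₘ = m 2^{-Mₘ}` and `Mₘ` growing
quadratically. At dyadic points of level `n ≤ 2Mₘ` the waves of index `≥ m` are constant, so
`Qₙ(X) = Qₙ(Sₘ)` for the partial sum `Sₘ`, whose Lipschitz constant is tiny compared with `2^{Mₘ}`;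
this gives `Q_{2Mₘ}(X) ≤ 4^{-m}`. At level `2Mₘ + 1` the `m`-th wave alternates between `±aₘ`,
and its increments `±2aₘ` dominate those of `Sₘ`, so `Q_{2Mₘ+1}(X) ≥ 2^{2Mₘ+1} aₘ² = 2m²`.
-/

open Filter Topology

/-- The level-`n` dyadic quadratic variation sum of `X : ℝ → ℝ` on `[0,1]`. -/
noncomputable def dyadicQVSum (X : ℝ → ℝ) (n : ℕ) : ℝ :=
  ∑ k ∈ Finset.range (2 ^ n), (X (((k : ℝ) + 1) / 2 ^ n) - X ((k : ℝ) / 2 ^ n)) ^ 2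

open Real Finset

lemma dyadicQVSum_nonneg (X : ℝ → ℝ) (n : ℕ) : 0 ≤ dyadicQVSum X n :=
  sum_nonneg fun _ _ => sq_nonneg _

lemma dyadicQVSum_le_of_abs_sub_le {X : ℝ → ℝ} {n : ℕ} {δ : ℝ}
    (h : ∀ k : ℕ, |X (((k : ℝ) + 1) / 2 ^ n) - X ((k : ℝ) / 2 ^ n)| ≤ δ) :
    dyadicQVSum X n ≤ 2 ^ n * δ ^ 2 := by
  have := sum_le_card_nsmul (range (2 ^ n)) _ (δ ^ 2)
    fun k _ => sq_le_sq.2 ((h k).trans (le_abs_self δ))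
  simpa [dyadicQVSum] using this

lemma le_dyadicQVSum_of_le_abs_sub {X : ℝ → ℝ} {n : ℕ} {δ : ℝ} (hδ : 0 ≤ δ)
    (h : ∀ k : ℕ, δ ≤ |X (((k : ℝ) + 1) / 2 ^ n) - X ((k : ℝ) / 2 ^ n)|) :
    2 ^ n * δ ^ 2 ≤ dyadicQVSum X n := by
  have := card_nsmul_le_sum (range (2 ^ n)) _ (δ ^ 2)
    fun k _ => sq_le_sq.2 ((abs_of_nonneg hδ).trans_le (h k))
  simpa [dyadicQVSum] using this

lemma dyadicQVSum_eq_of_eq_add_const {X Y : ℝ → ℝ} {n : ℕ} (C : ℝ)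
    (h : ∀ k : ℕ, X (k / 2 ^ n) = Y (k / 2 ^ n) + C) : dyadicQVSum X n = dyadicQVSum Y n := by
  refine sum_congr rfl fun k _ => ?_
  have hk := h (k + 1)
  push_cast at hk
  rw [hk, h k, add_sub_add_right_eq_sub]

lemma abs_sub_dyadic_le_of_lipschitz {X : ℝ → ℝ} {L : ℝ}
    (hX : ∀ x y, |X x - X y| ≤ L * |x - y|) (n k : ℕ) :
    |X (((k : ℝ) + 1) / 2 ^ n) - X ((k : ℝ) / 2 ^ n)| ≤ L / 2 ^ n := by
  have hstep : ((k : ℝ) + 1) / 2 ^ n - k / 2 ^ n = 1 / 2 ^ n := by ring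
  have := hX (((k : ℝ) + 1) / 2 ^ n) ((k : ℝ) / 2 ^ n)
  rwa [hstep, abs_of_pos (show (0 : ℝ) < 1 / 2 ^ n by positivity), mul_one_div] at this

lemma dyadicQVSum_le_of_lipschitz {X : ℝ → ℝ} {L : ℝ}
    (hX : ∀ x y, |X x - X y| ≤ L * |x - y|) (n : ℕ) :
    dyadicQVSum X n ≤ L ^ 2 / 2 ^ n := by
  calc dyadicQVSum X n ≤ 2 ^ n * (L / 2 ^ n) ^ 2 :=
        dyadicQVSum_le_of_abs_sub_le (abs_sub_dyadic_le_of_lipschitz hX n)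
    _ = L ^ 2 / 2 ^ n := by field_simp

lemma cos_two_pi_mul_two_pow_mul_dyadic {N n : ℕ} (h : n ≤ N) (k : ℕ) :
    cos (2 * π * 2 ^ N * (k / 2 ^ n)) = 1 := by
  obtain ⟨d, rfl⟩ := Nat.exists_eq_add_of_le h
  have : 2 * π * 2 ^ (n + d) * (k / 2 ^ n) = ((k * 2 ^ d : ℕ) : ℝ) * (2 * π) := by
    rw [pow_add]
    push_cast
    field_simp
  rw [this, cos_nat_mul_two_pi]

lemma cos_two_pi_mul_two_pow_mul_dyadic_succ (N k : ℕ) :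
    cos (2 * π * 2 ^ N * (k / 2 ^ (N + 1))) = (-1) ^ k := by
  have : 2 * π * 2 ^ N * (k / 2 ^ (N + 1)) = k * π := by
    rw [pow_succ]
    field_simp
  rw [this, cos_nat_mul_pi]

namespace LacunaryCosine

def scaleExp : ℕ → ℕ
  | 0 => 0
  | m + 1 => scaleExp m + 2 * m + 5

lemma scaleExp_succ (m : ℕ) : scaleExp (m + 1) = scaleExp m + 2 * m + 5 := rfl

lemma two_mul_le_scaleExp (m : ℕ) : 2 * m ≤ scaleExp m := by
  induction m with
  | zero => rfl
  | succ m ih => rw [scaleExp_succ]; omega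

lemma scaleExp_mono : Monotone scaleExp :=
  monotone_nat_of_le_succ fun m => by rw [scaleExp_succ]; omega

noncomputable def amplitude (m : ℕ) : ℝ := m / 2 ^ scaleExp m

lemma amplitude_nonneg (m : ℕ) : 0 ≤ amplitude m := by unfold amplitude; positivity

lemma amplitude_le (m : ℕ) : amplitude m ≤ (1 / 2) ^ m := by
  have hm : (m : ℝ) ≤ 2 ^ m := by exact_mod_cast Nat.lt_two_pow_self.le
  have hM : (2 : ℝ) ^ (m + m) ≤ 2 ^ scaleExp m :=
    pow_le_pow_right₀ one_le_two (by have := two_mul_le_scaleExp m; omega)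
  calc amplitude m ≤ 2 ^ m / 2 ^ (m + m) := div_le_div₀ (by positivity) hm (by positivity) hM
    _ = (1 / 2) ^ m := by rw [pow_add, div_pow, one_pow]; field_simp

lemma summable_amplitude : Summable amplitude :=
  .of_nonneg_of_le amplitude_nonneg amplitude_le
    (summable_geometric_of_lt_one (by norm_num) (by norm_num))

noncomputable def wave (m : ℕ) (t : ℝ) : ℝ :=
  amplitude m * cos (2 * π * 2 ^ (2 * scaleExp m) * t)

noncomputable def partialSum (m : ℕ) (t : ℝ) : ℝ := ∑ j ∈ range m, wave j t

lemma partialSum_succ (m : ℕ) (t : ℝ) : partialSum (m + 1) t = partialSum m t + wave m t :=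
  sum_range_succ _ _

noncomputable def series (t : ℝ) : ℝ := ∑' m, wave m t

lemma abs_wave_le (m : ℕ) (t : ℝ) : |wave m t| ≤ amplitude m := by
  rw [wave, abs_mul, abs_of_nonneg (amplitude_nonneg m)]
  exact mul_le_of_le_one_right (amplitude_nonneg m) (abs_cos_le_one _)

lemma summable_wave (t : ℝ) : Summable fun m => wave m t :=
  .of_norm_bounded summable_amplitude fun m => abs_wave_le m t

lemma continuous_series : Continuous series :=
  continuous_tsum (fun m => by unfold wave; fun_prop) summable_amplitude fun m t => abs_wave_le m t

lemma wave_dyadic_of_le {m n : ℕ} (h : n ≤ 2 * scaleExp m) (k : ℕ) :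
    wave m (k / 2 ^ n) = amplitude m := by
  rw [wave, cos_two_pi_mul_two_pow_mul_dyadic h, mul_one]

lemma wave_dyadic_succ (m k : ℕ) :
    wave m (k / 2 ^ (2 * scaleExp m + 1)) = amplitude m * (-1) ^ k := by
  rw [wave, cos_two_pi_mul_two_pow_mul_dyadic_succ]

lemma abs_wave_sub_le (m : ℕ) (x y : ℝ) :
    |wave m x - wave m y| ≤ 2 * π * (m * 2 ^ scaleExp m) * |x - y| := by
  have hfreq : amplitude m * (2 * π * 2 ^ (2 * scaleExp m)) = 2 * π * (m * 2 ^ scaleExp m) := by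
    rw [amplitude, two_mul (scaleExp m), pow_add]
    field_simp
  calc |wave m x - wave m y|
      = amplitude m * |cos (2 * π * 2 ^ (2 * scaleExp m) * x) -
          cos (2 * π * 2 ^ (2 * scaleExp m) * y)| := by
        rw [wave, wave, ← mul_sub, abs_mul, abs_of_nonneg (amplitude_nonneg m)]
    _ ≤ amplitude m * |2 * π * 2 ^ (2 * scaleExp m) * x - 2 * π * 2 ^ (2 * scaleExp m) * y| :=
        mul_le_mul_of_nonneg_left (abs_cos_sub_cos_le _ _) (amplitude_nonneg m)
    _ = 2 * π * (m * 2 ^ scaleExp m) * |x - y| := by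
        rw [← mul_sub, abs_mul, abs_of_pos (by positivity), ← mul_assoc, hfreq]

def slopeSum (m : ℕ) : ℕ := ∑ j ∈ range m, j * 2 ^ scaleExp j

lemma abs_partialSum_sub_le (m : ℕ) (x y : ℝ) :
    |partialSum m x - partialSum m y| ≤ 2 * π * slopeSum m * |x - y| := by
  calc |partialSum m x - partialSum m y| = |∑ j ∈ range m, (wave j x - wave j y)| := by
        rw [partialSum, partialSum, sum_sub_distrib]
    _ ≤ ∑ j ∈ range m, 2 * π * (j * 2 ^ scaleExp j) * |x - y| :=
        (abs_sum_le_sum_abs _ _).trans (sum_le_sum fun j _ => abs_wave_sub_le j x y)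
    _ = 2 * π * slopeSum m * |x - y| := by
        rw [← sum_mul, ← mul_sum, slopeSum]
        push_cast
        rfl

lemma two_pow_mul_slopeSum_le (m : ℕ) : 2 ^ (m + 3) * slopeSum m ≤ 2 ^ scaleExp m := by
  induction m with
  | zero => simp [slopeSum]
  | succ m ih =>
    have hm : m ≤ 2 ^ m := Nat.lt_two_pow_self.le
    calc 2 ^ (m + 4) * slopeSum (m + 1)
        = 2 * (2 ^ (m + 3) * slopeSum m) + 2 ^ (m + 4) * m * 2 ^ scaleExp m := by
          rw [slopeSum, sum_range_succ, ← slopeSum]; ring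
      _ ≤ 2 * 2 ^ scaleExp m + 2 ^ (m + 4) * 2 ^ m * 2 ^ scaleExp m := by gcongr
      _ = (2 + 2 ^ (2 * m + 4)) * 2 ^ scaleExp m := by ring
      _ ≤ 2 ^ (2 * m + 5) * 2 ^ scaleExp m := by
          have : 2 ≤ 2 ^ (2 * m + 4) := Nat.le_self_pow (by omega) 2
          have hpow : 2 ^ (2 * m + 5) = 2 ^ (2 * m + 4) * 2 := pow_succ 2 _
          gcongr
          omega
      _ = 2 ^ scaleExp (m + 1) := by rw [scaleExp_succ, ← pow_add]; ring_nf

lemma series_dyadic_of_le {m n : ℕ} (h : n ≤ 2 * scaleExp m) (k : ℕ) :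
    series (k / 2 ^ n) = partialSum m (k / 2 ^ n) + ∑' j, amplitude (j + m) := by
  rw [series, partialSum, ← (summable_wave _).sum_add_tsum_nat_add m]
  congr 1
  exact tsum_congr fun j =>
    wave_dyadic_of_le (h.trans (Nat.mul_le_mul_left 2 (scaleExp_mono (Nat.le_add_left m j)))) k

lemma dyadicQVSum_series_of_le {m n : ℕ} (h : n ≤ 2 * scaleExp m) :
    dyadicQVSum series n = dyadicQVSum (partialSum m) n :=
  dyadicQVSum_eq_of_eq_add_const _ (series_dyadic_of_le h)

lemma dyadicQVSum_series_le (m : ℕ) : dyadicQVSum series (2 * scaleExp m) ≤ (1 / 4) ^ m := by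
  have hslope : 8 * (slopeSum m : ℝ) ≤ 2 ^ scaleExp m / 2 ^ m := by
    rw [le_div_iff₀ (by positivity)]
    calc 8 * (slopeSum m : ℝ) * 2 ^ m = 2 ^ (m + 3) * slopeSum m := by ring
      _ ≤ 2 ^ scaleExp m := by exact_mod_cast two_pow_mul_slopeSum_le m
  rw [dyadicQVSum_series_of_le le_rfl]
  calc dyadicQVSum (partialSum m) (2 * scaleExp m)
      ≤ (2 * π * slopeSum m) ^ 2 / 2 ^ (2 * scaleExp m) :=
        dyadicQVSum_le_of_lipschitz (abs_partialSum_sub_le m) _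
    _ ≤ (8 * slopeSum m) ^ 2 / 2 ^ (2 * scaleExp m) := by
        gcongr
        linarith [pi_le_four]
    _ ≤ (2 ^ scaleExp m / 2 ^ m) ^ 2 / 2 ^ (2 * scaleExp m) := by gcongr
    _ = (1 / 4) ^ m := by
        rw [mul_comm, pow_mul, div_pow, one_div_pow, show (4 : ℝ) ^ m = (2 ^ m) ^ 2 by
          rw [← pow_mul, mul_comm, pow_mul]; norm_num]
        field_simp

lemma pi_mul_slopeSum_le (m : ℕ) : π * slopeSum m ≤ m * 2 ^ scaleExp m := by
  rcases m with _ | m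
  · simp [slopeSum]
  have hpi : π ≤ 2 ^ (m + 1 + 3) := by
    linarith [pi_le_four, pow_le_pow_right₀ (by norm_num : (1 : ℝ) ≤ 2) (by omega : 2 ≤ m + 1 + 3)]
  calc π * slopeSum (m + 1) ≤ 2 ^ (m + 1 + 3) * slopeSum (m + 1) := by gcongr
    _ ≤ 2 ^ scaleExp (m + 1) := by exact_mod_cast two_pow_mul_slopeSum_le (m + 1)
    _ ≤ ↑(m + 1) * 2 ^ scaleExp (m + 1) := by
        rw [Nat.cast_succ]
        nlinarith [pow_pos (two_pos : (0 : ℝ) < 2) (scaleExp (m + 1))]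

lemma two_pow_two_mul_scaleExp_add_one (m : ℕ) :
    (2 : ℝ) ^ (2 * scaleExp m + 1) = 2 * 2 ^ scaleExp m * 2 ^ scaleExp m := by
  rw [pow_succ, two_mul, pow_add]
  ring

lemma amplitude_le_abs_partialSum_succ_sub (m k : ℕ) :
    amplitude m ≤ |partialSum (m + 1) ((k + 1) / 2 ^ (2 * scaleExp m + 1)) -
      partialSum (m + 1) (k / 2 ^ (2 * scaleExp m + 1))| := by
  set n := 2 * scaleExp m + 1
  set ΔS := partialSum m ((k + 1) / 2 ^ n) - partialSum m (k / 2 ^ n)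
  have hS : |ΔS| ≤ amplitude m := by
    refine (abs_sub_dyadic_le_of_lipschitz (abs_partialSum_sub_le m) n k).trans ?_
    rw [two_pow_two_mul_scaleExp_add_one, amplitude,
      div_le_div_iff₀ (by positivity) (by positivity)]
    nlinarith [pi_mul_slopeSum_le m, pow_pos (two_pos : (0 : ℝ) < 2) (scaleExp m)]
  have hwave : wave m ((k + 1) / 2 ^ n) - wave m (k / 2 ^ n) = -2 * amplitude m * (-1) ^ k := by
    have := wave_dyadic_succ m (k + 1)
    push_cast at this
    rw [this, wave_dyadic_succ]
    ring
  have hwave_abs : |-2 * amplitude m * (-1) ^ k| = 2 * amplitude m := by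
    simp [abs_mul, abs_of_nonneg (amplitude_nonneg m)]
  rw [partialSum_succ, partialSum_succ, add_sub_add_comm, hwave]
  have := abs_sub (ΔS + -2 * amplitude m * (-1) ^ k) ΔS
  rw [add_sub_cancel_left, hwave_abs] at this
  linarith

lemma le_dyadicQVSum_series (m : ℕ) :
    2 * (m : ℝ) ^ 2 ≤ dyadicQVSum series (2 * scaleExp m + 1) := by
  calc 2 * (m : ℝ) ^ 2 = 2 ^ (2 * scaleExp m + 1) * amplitude m ^ 2 := by
        rw [two_pow_two_mul_scaleExp_add_one, amplitude]
        field_simp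
    _ ≤ dyadicQVSum (partialSum (m + 1)) (2 * scaleExp m + 1) :=
        le_dyadicQVSum_of_le_abs_sub (amplitude_nonneg m) (amplitude_le_abs_partialSum_succ_sub m)
    _ = dyadicQVSum series (2 * scaleExp m + 1) :=
        (dyadicQVSum_series_of_le (by rw [scaleExp_succ]; omega)).symm

lemma tendsto_dyadicQVSum_series_atTop :
    Tendsto (fun m => dyadicQVSum series (2 * scaleExp m + 1)) atTop atTop := by
  refine tendsto_atTop_mono (fun m => ?_) tendsto_natCast_atTop_atTop
  have : (m : ℝ) ≤ m ^ 2 := by exact_mod_cast Nat.le_self_pow two_ne_zero m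
  nlinarith [le_dyadicQVSum_series m]

lemma tendsto_dyadicQVSum_series_zero :
    Tendsto (fun m => dyadicQVSum series (2 * scaleExp m)) atTop (𝓝 0) :=
  squeeze_zero (fun m => dyadicQVSum_nonneg _ _) dyadicQVSum_series_le
    (tendsto_pow_atTop_nhds_zero_of_lt_one (by norm_num) (by norm_num))

end LacunaryCosine

theorem exists_continuous_limsup_qv_top_liminf_qv_zero :
    ∃ X : ℝ → ℝ, ContinuousOn X (Set.Icc 0 1) ∧
      Filter.limsup (fun n => ((dyadicQVSum X n : ℝ) : EReal)) atTop = ⊤ ∧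
      Filter.liminf (fun n => ((dyadicQVSum X n : ℝ) : EReal)) atTop = 0 := by
  have hlevel : Tendsto (fun m => 2 * LacunaryCosine.scaleExp m) atTop atTop :=
    tendsto_atTop_mono (fun m => show m ≤ 2 * LacunaryCosine.scaleExp m by
      have := LacunaryCosine.two_mul_le_scaleExp m; omega) tendsto_id
  refine ⟨LacunaryCosine.series, LacunaryCosine.continuous_series.continuousOn, ?_, ?_⟩
  · have hsub := EReal.tendsto_coe_nhds_top_iff.2 LacunaryCosine.tendsto_dyadicQVSum_series_atTop
    exact top_le_iff.1 (hsub.limsup_eq.symm.trans_le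
      ((tendsto_atTop_mono (fun m => Nat.le_succ _) hlevel).limsup_comp_le_limsup
        (u := fun n => ((dyadicQVSum LacunaryCosine.series n : ℝ) : EReal))))
  · have hsub := EReal.tendsto_coe.2 LacunaryCosine.tendsto_dyadicQVSum_series_zero
    exact le_antisymm
      (hlevel.liminf_le_liminf_comp.trans_eq (hsub.liminf_eq.trans EReal.coe_zero))
      (le_liminf_of_le (by isBoundedDefault)
        (.of_forall fun n => EReal.coe_nonneg.2 (dyadicQVSum_nonneg _ n)))
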